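/- For a graded poset P of rank n and q > n+1, toggle-promotion TogPro on A^ℓ(P × [q−n−1]) equals the composition Row⁻¹(P × {1}) ∘ Row⁻¹(P × {2}) ∘ ⋯ ∘ Row⁻¹(P × {q−n−1}), where Row⁻¹(P × {j}) is the composition of toggles τ_{(p,j)} taken along a linear extension of P from bottom to top (minimal ranks toggled first). -/

import Mathlib

open scoped Classical

/-- `Q̂`: the poset `Q` with a minimum element `0̂` and a maximum element `1̂` adjoined. -/
abbrev Qhat (Q : Type*) := WithBot (WithTop Q)

/-- The embedding of `Q` into `Q̂`. -/
def emb {Q : Type*} (x : Q) : Qhat Q := ((x : WithTop Q) : Qhat Q)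

/-- `∇_σ(x)`: the minimum of `σ(y)` over elements `y` covering `x` in `Q̂`. -/
noncomputable def nabla {Q : Type*} [PartialOrder Q] (σ : Qhat Q → ℤ) (x : Qhat Q) : ℤ :=
  sInf (σ '' {y | x ⋖ y})

/-- `Δ_σ(x)`: the maximum of `σ(y)` over elements `y` covered by `x` in `Q̂`. -/
noncomputable def delta {Q : Type*} [PartialOrder Q] (σ : Qhat Q → ℤ) (x : Qhat Q) : ℤ :=
  sSup (σ '' {y | y ⋖ x})

/-- The piecewise-linear toggle `τ_x` at an element `x ∈ Q`, acting on maps `Q̂ → ℤ`: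
it replaces the value at `x` by `∇_σ(x) + Δ_σ(x) − σ(x)` and leaves all other values fixed. -/
noncomputable def toggle {Q : Type*} [PartialOrder Q] (x : Q) (σ : Qhat Q → ℤ) :
    Qhat Q → ℤ :=
  fun z => if z = emb x then nabla σ (emb x) + delta σ (emb x) - σ (emb x) else σ z

/-- `σ ∈ A^ℓ(Q)`: an order-preserving map `Q̂ → ℤ` with `σ(0̂) = 0` and `σ(1̂) = ℓ`
(such a map automatically takes values in `{0,…,ℓ}`). -/
def IsQPart {Q : Type*} [PartialOrder Q] (ℓ : ℤ) (σ : Qhat Q → ℤ) : Prop :=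
  Monotone σ ∧ σ ⊥ = 0 ∧ σ ⊤ = ℓ

section ToggleAux

variable {Q : Type*} [PartialOrder Q]

lemma emb_injective : Function.Injective (emb (Q := Q)) := fun a b h => by
  simpa [emb] using h

lemma emb_covBy_emb {x y : Q} (h : emb x ⋖ emb y) : x ⋖ y := by
  have h1 : ((x : WithTop Q) : Qhat Q) ⋖ ((y : WithTop Q) : Qhat Q) := h
  rw [WithBot.coe_covBy_coe] at h1
  exact WithTop.coe_covBy_coe.mp h1

lemma toggle_apply_ne (x : Q) (σ : Qhat Q → ℤ) {z : Qhat Q} (h : z ≠ emb x) :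
    toggle x σ z = σ z := if_neg h

lemma toggle_apply_emb (x : Q) (σ : Qhat Q → ℤ) :
    toggle x σ (emb x) = nabla σ (emb x) + delta σ (emb x) - σ (emb x) := if_pos rfl

lemma nabla_toggle {x y : Q} (h : ¬ x ⋖ y) (σ : Qhat Q → ℤ) :
    nabla (toggle y σ) (emb x) = nabla σ (emb x) := by
  unfold nabla
  congr 1
  apply Set.image_congr
  intro w hw
  apply toggle_apply_ne
  rintro rfl
  exact h (emb_covBy_emb hw)

lemma delta_toggle {x y : Q} (h : ¬ y ⋖ x) (σ : Qhat Q → ℤ) :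
    delta (toggle y σ) (emb x) = delta σ (emb x) := by
  unfold delta
  congr 1
  apply Set.image_congr
  intro w hw
  apply toggle_apply_ne
  rintro rfl
  exact h (emb_covBy_emb hw)

lemma toggle_comm {x y : Q} (h1 : ¬ x ⋖ y) (h2 : ¬ y ⋖ x) (σ : Qhat Q → ℤ) :
    toggle x (toggle y σ) = toggle y (toggle x σ) := by
  rcases eq_or_ne x y with rfl | hne
  · rfl
  have hxy : emb x ≠ emb y := fun h => hne (emb_injective h)
  funext z
  rcases eq_or_ne z (emb x) with rfl | hzx
  · rw [toggle_apply_emb x (toggle y σ), nabla_toggle h1, delta_toggle h2,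
      toggle_apply_ne y σ hxy, toggle_apply_ne y (toggle x σ) hxy, toggle_apply_emb x σ]
  rcases eq_or_ne z (emb y) with rfl | hzy
  · rw [toggle_apply_ne x (toggle y σ) hzx, toggle_apply_emb y σ,
      toggle_apply_emb y (toggle x σ), nabla_toggle h2, delta_toggle h1,
      toggle_apply_ne x σ hzx]
  · rw [toggle_apply_ne x (toggle y σ) hzx, toggle_apply_ne y σ hzy,
      toggle_apply_ne y (toggle x σ) hzy, toggle_apply_ne x σ hzx]

end ToggleAux

section TogPro

variable {P : Type*} [PartialOrder P] [Fintype P]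

/-- Composition of the toggles at the elements of the list `l` (applied right-to-left);
used for sets of toggles that pairwise commute, so the order within `l` is immaterial. -/
noncomputable def compToggles {Q : Type*} [PartialOrder Q] (l : List Q)
    (σ : Qhat Q → ℤ) : Qhat Q → ℤ :=
  l.foldr toggle σ

section CompAux

variable {Q : Type*} [PartialOrder Q]

lemma compToggles_cons (a : Q) (l : List Q) (σ : Qhat Q → ℤ) :
    compToggles (a :: l) σ = toggle a (compToggles l σ) := rfl

lemma compToggles_append (l₁ l₂ : List Q) (σ : Qhat Q → ℤ) :
    compToggles (l₁ ++ l₂) σ = compToggles l₁ (compToggles l₂ σ) := by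
  simp [compToggles, List.foldr_append]

/-- The relation used for the pairwise condition: either `ρ x y` (the sorting order)
or the toggles at `x` and `y` commute. -/
def RC {Q : Type*} [PartialOrder Q] (ρ : Q → Q → Prop) (x y : Q) : Prop :=
  ρ x y ∨ ∀ σ : Qhat Q → ℤ, toggle x (toggle y σ) = toggle y (toggle x σ)

lemma compToggles_orderedInsert (ρ : Q → Q → Prop) [DecidableRel ρ] (a : Q) :
    ∀ (M : List Q), (∀ b ∈ M, RC ρ a b) →
      ∀ σ, compToggles (List.orderedInsert ρ a M) σ = toggle a (compToggles M σ)
  | [], _, σ => rfl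
  | b :: M, h, σ => by
    show compToggles (if ρ a b then a :: b :: M else b :: List.orderedInsert ρ a M) σ = _
    by_cases hab : ρ a b
    · rw [if_pos hab]; rfl
    · rw [if_neg hab]
      have hcomm := (h b List.mem_cons_self).resolve_left hab
      calc compToggles (b :: List.orderedInsert ρ a M) σ
          = toggle b (compToggles (List.orderedInsert ρ a M) σ) := rfl
        _ = toggle b (toggle a (compToggles M σ)) := by
              rw [compToggles_orderedInsert ρ a M
                (fun c hc => h c (List.mem_cons_of_mem _ hc)) σ]
        _ = toggle a (toggle b (compToggles M σ)) := (hcomm _).symm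
        _ = toggle a (compToggles (b :: M) σ) := rfl

lemma compToggles_insertionSort (ρ : Q → Q → Prop) [DecidableRel ρ] :
    ∀ (L : List Q), L.Pairwise (RC ρ) →
      ∀ σ, compToggles L σ = compToggles (List.insertionSort ρ L) σ
  | [], _, _ => rfl
  | a :: L, h, σ => by
    have hp := List.pairwise_cons.mp h
    show compToggles (a :: L) σ
        = compToggles (List.orderedInsert ρ a (List.insertionSort ρ L)) σ
    rw [compToggles_cons, compToggles_insertionSort ρ L hp.2 σ,
      compToggles_orderedInsert ρ a (List.insertionSort ρ L)
        (fun b hb => hp.1 b ((List.perm_insertionSort ρ L).subset hb)) σ]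

lemma compToggles_eq_of_perm (ρ : Q → Q → Prop) [DecidableRel ρ]
    [IsTotal Q ρ] [IsTrans Q ρ] [IsAntisymm Q ρ]
    {L₁ L₂ : List Q} (hp : L₁.Perm L₂)
    (h₁ : L₁.Pairwise (RC ρ)) (h₂ : L₂.Pairwise (RC ρ)) (σ : Qhat Q → ℤ) :
    compToggles L₁ σ = compToggles L₂ σ := by
  rw [compToggles_insertionSort ρ L₁ h₁ σ, compToggles_insertionSort ρ L₂ h₂ σ]
  have heq := List.Perm.eq_of_pairwise'
    (List.pairwise_insertionSort ρ L₁) (List.pairwise_insertionSort ρ L₂)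
    ((List.perm_insertionSort ρ L₁).trans (hp.trans (List.perm_insertionSort ρ L₂).symm))
  rw [heq]

lemma foldl_compToggles (g : ℕ → List Q) :
    ∀ (l : List ℕ) (σ : Qhat Q → ℤ),
      l.foldl (fun σ k => compToggles (g k) σ) σ
        = compToggles ((l.reverse.map g).flatten) σ
  | [], σ => rfl
  | k :: l, σ => by
    rw [List.foldl_cons, foldl_compToggles g l, List.reverse_cons, List.map_append,
      List.flatten_append, compToggles_append]
    simp only [List.map_cons, List.map_nil, List.flatten_cons, List.flatten_nil,
      List.append_nil]

end CompAux

/-- The key used to order toggles: `κ(p,i) = i − rank p`. -/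
noncomputable def kappa {P : Type*} (rk : P → ℕ) {m : ℕ} (x : P × Fin m) : ℤ :=
  ((x.2 : ℕ) : ℤ) - (rk x.1 : ℤ)

/-- The linear order used to sort toggles: by `κ`, with an arbitrary tie-break. -/
noncomputable def rho {P : Type*} [Fintype P] (rk : P → ℕ) {m : ℕ} (x y : P × Fin m) : Prop :=
  kappa rk x < kappa rk y ∨
    (kappa rk x = kappa rk y ∧
      ((Fintype.equivFin (P × Fin m)) x : ℕ) ≤ (Fintype.equivFin (P × Fin m)) y)

lemma isTotal_rho {P : Type*} [Fintype P] (rk : P → ℕ) (m : ℕ) :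
    IsTotal (P × Fin m) (rho rk) := by
  constructor
  intro a b
  rcases lt_trichotomy (kappa rk a) (kappa rk b) with h | h | h
  · exact Or.inl (Or.inl h)
  · rcases le_total ((Fintype.equivFin (P × Fin m)) a : ℕ)
      ((Fintype.equivFin (P × Fin m)) b : ℕ) with h' | h'
    · exact Or.inl (Or.inr ⟨h, h'⟩)
    · exact Or.inr (Or.inr ⟨h.symm, h'⟩)
  · exact Or.inr (Or.inl h)

lemma isTrans_rho {P : Type*} [Fintype P] (rk : P → ℕ) (m : ℕ) :
    IsTrans (P × Fin m) (rho rk) := by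
  constructor
  rintro a b c (h | ⟨h, h'⟩) (g | ⟨g, g'⟩)
  · exact Or.inl (h.trans g)
  · exact Or.inl (g ▸ h)
  · exact Or.inl (h ▸ g)
  · exact Or.inr ⟨h.trans g, h'.trans g'⟩

lemma isAntisymm_rho {P : Type*} [Fintype P] (rk : P → ℕ) (m : ℕ) :
    IsAntisymm (P × Fin m) (rho rk) := by
  constructor
  rintro a b (h | ⟨h, h'⟩) (g | ⟨g, g'⟩)
  · exact absurd g (not_lt.mpr h.le)
  · exact absurd h (not_lt.mpr g.le)
  · exact absurd g (not_lt.mpr h.le)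
  · have : ((Fintype.equivFin (P × Fin m)) a : ℕ) = (Fintype.equivFin (P × Fin m)) b :=
      le_antisymm h' g'
    exact (Fintype.equivFin (P × Fin m)).injective (Fin.val_injective this)

/-- The list of toggles in `τ_k`. -/
noncomputable def tl {P : Type*} [PartialOrder P] [Fintype P] (rk : P → ℕ)
    (q n m k : ℕ) : List (P × Fin m) :=
  (Finset.univ.filter
    (fun pi : P × Fin m => (pi.2 : ℕ) + 1 + k = q - n + rk pi.1)).toList

/-- The list of toggles in a rank slice of `Row⁻¹`. -/
noncomputable def sl {P : Type*} [PartialOrder P] [Fintype P] (rk : P → ℕ)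
    (m j r : ℕ) : List (P × Fin m) :=
  (Finset.univ.filter
    (fun pi : P × Fin m => rk pi.1 = r ∧ (pi.2 : ℕ) + 1 = j)).toList

/-- The flattened list of toggles in `Row⁻¹(P × {m − j₀})`. -/
noncomputable def glist {P : Type*} [PartialOrder P] [Fintype P] (rk : P → ℕ)
    (m n j0 : ℕ) : List (P × Fin m) :=
  ((List.range (n + 1)).reverse.map (sl rk m (m - j0))).flatten

/-- The toggle composition `τ_k` in TogPro on `A^ℓ(P × [q−n−1])`: the composition of all
toggles `τ_{(p,i)}` with `i = q − n + rank(p) − k` (1-based `i`; here `Fin m` is 0-based,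
so the condition reads `i + 1 + k = q − n + rank(p)`). These toggles pairwise commute. -/
noncomputable def tauK (rk : P → ℕ) (q n m k : ℕ) (σ : Qhat (P × Fin m) → ℤ) :
    Qhat (P × Fin m) → ℤ :=
  compToggles
    ((Finset.univ.filter
        (fun pi : P × Fin m => (pi.2 : ℕ) + 1 + k = q - n + rk pi.1)).toList) σ

/-- Toggle-promotion `TogPro = τ_{q−1} ∘ ⋯ ∘ τ_2 ∘ τ_1` on `A^ℓ(P × [q−n−1])`. -/
noncomputable def togPro (rk : P → ℕ) (q n m : ℕ) (σ : Qhat (P × Fin m) → ℤ) :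
    Qhat (P × Fin m) → ℤ :=
  (List.range (q - 1)).foldl (fun σ k => tauK rk q n m (k + 1) σ) σ

/-- `Row⁻¹(P × {j})` (1-based `j`): the composition
`τ_{(P_n,j)} ∘ τ_{(P_{n−1},j)} ∘ ⋯ ∘ τ_{(P_0,j)}`, toggling the elements of `P × {j}`
along a linear extension of `P` from bottom to top (minimal ranks first); the toggles
within each rank set `P_m` pairwise commute. -/
noncomputable def rowInvSlice (rk : P → ℕ) (n m j : ℕ) (σ : Qhat (P × Fin m) → ℤ) :
    Qhat (P × Fin m) → ℤ :=
  (List.range (n + 1)).foldl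
    (fun σ r =>
      compToggles
        ((Finset.univ.filter
            (fun pi : P × Fin m => rk pi.1 = r ∧ (pi.2 : ℕ) + 1 = j)).toList) σ) σ

/-- for a graded poset `P` of rank `n` and `q > n + 1`, toggle-promotion on
`A^ℓ(P × [q−n−1])` equals
`Row⁻¹(P × {1}) ∘ Row⁻¹(P × {2}) ∘ ⋯ ∘ Row⁻¹(P × {q−n−1})`
(so the slice `j = q−n−1` is applied first and the slice `j = 1` last). -/
theorem togPro_eq_rowInverses
    {P : Type*} [PartialOrder P] [Fintype P]
    (rk : P → ℕ) (n q : ℕ) (hq : n + 1 < q)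
    (hcov : ∀ p p' : P, p ⋖ p' → rk p' = rk p + 1)
    (hmin : ∀ p : P, IsMin p → rk p = 0)
    (hmax : ∀ p : P, IsMax p → rk p = n)
    (ℓ : ℤ) (hℓ : 1 ≤ ℓ)
    (σ : Qhat (P × Fin (q - n - 1)) → ℤ) (hσ : IsQPart ℓ σ) :
    togPro rk q n (q - n - 1) σ =
      (List.range (q - n - 1)).foldl
        (fun σ j0 => rowInvSlice rk n (q - n - 1) (q - n - 1 - j0) σ) σ := by
  classical
  -- Every element has rank at most `n`.
  have hrkle : ∀ p : P, rk p ≤ n := by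
    intro p
    obtain ⟨b, hpb, hb⟩ := Finite.exists_le_maximal (a := p) (p := fun _ : P => True) trivial
    have hbmax : IsMax b := fun c hc => hb.2 trivial hc
    have hrb : rk b = n := hmax b hbmax
    rcases eq_or_lt_of_le hpb with rfl | hlt
    · omega
    · haveI : LocallyFiniteOrder P := Fintype.toLocallyFiniteOrder
      have hgen : ∀ {a c : P}, Relation.TransGen (· ⋖ ·) a c → rk a < rk c := by
        intro a c h
        induction h with
        | single h => have := hcov _ _ h; omega
        | tail _ h ih => have := hcov _ _ h; omega
      have := hgen (transGen_covBy_of_lt hlt)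
      omega
  -- Structure of covering relations in the product.
  have covCases : ∀ x y : P × Fin (q - n - 1), x ⋖ y →
      (rk y.1 = rk x.1 + 1 ∧ (x.2 : ℕ) = (y.2 : ℕ)) ∨
        ((x.2 : ℕ) + 1 = (y.2 : ℕ) ∧ rk y.1 = rk x.1) := by
    rintro ⟨p, i⟩ ⟨p', i'⟩ h
    rcases Prod.mk_covBy_mk_iff.mp h with ⟨hc, rfl⟩ | ⟨hc, rfl⟩
    · exact Or.inl ⟨hcov _ _ hc, rfl⟩
    · exact Or.inr ⟨Nat.covBy_iff_add_one_eq.mp (Fin.coe_covBy_iff.mpr hc), rfl⟩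
  -- Main local tool: to prove `RC (rho rk) x y` it suffices to handle the covering cases.
  have leaf : ∀ x y : P × Fin (q - n - 1),
      ((rk y.1 = rk x.1 + 1 ∧ (x.2 : ℕ) = (y.2 : ℕ)) ∨
        ((x.2 : ℕ) + 1 = (y.2 : ℕ) ∧ rk y.1 = rk x.1) → kappa rk x < kappa rk y) →
      ((rk x.1 = rk y.1 + 1 ∧ (y.2 : ℕ) = (x.2 : ℕ)) ∨
        ((y.2 : ℕ) + 1 = (x.2 : ℕ) ∧ rk x.1 = rk y.1) → kappa rk x < kappa rk y) →
      RC (rho rk) x y := by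
    intro x y h1 h2
    by_cases hxy : x ⋖ y
    · exact Or.inl (Or.inl (h1 (covCases _ _ hxy)))
    by_cases hyx : y ⋖ x
    · exact Or.inl (Or.inl (h2 (covCases _ _ hyx)))
    · exact Or.inr (toggle_comm hxy hyx)
  have memtl : ∀ (k : ℕ) (x : P × Fin (q - n - 1)),
      x ∈ tl rk q n (q - n - 1) k ↔ (x.2 : ℕ) + 1 + k = q - n + rk x.1 := by
    intro k x; simp [tl]
  have memsl : ∀ (j r : ℕ) (x : P × Fin (q - n - 1)),
      x ∈ sl rk (q - n - 1) j r ↔ (rk x.1 = r ∧ (x.2 : ℕ) + 1 = j) := by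
    intro j r x; simp [sl]
  set BigL : List (P × Fin (q - n - 1)) :=
    ((List.range (q - 1)).reverse.map (fun k0 => tl rk q n (q - n - 1) (k0 + 1))).flatten
    with hBigLdef
  set BigR : List (P × Fin (q - n - 1)) :=
    ((List.range (q - n - 1)).reverse.map (glist rk (q - n - 1) n)).flatten with hBigRdef
  -- The two sides as toggle compositions of explicit lists.
  have hL : togPro rk q n (q - n - 1) σ = compToggles BigL σ := by
    rw [hBigLdef]
    unfold togPro
    exact foldl_compToggles (fun k0 => tl rk q n (q - n - 1) (k0 + 1))
      (List.range (q - 1)) σ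
  have hstep : (fun (σ : Qhat (P × Fin (q - n - 1)) → ℤ) j0 =>
      rowInvSlice rk n (q - n - 1) (q - n - 1 - j0) σ)
      = (fun σ j0 => compToggles (glist rk (q - n - 1) n j0) σ) := by
    funext σ' j0
    unfold rowInvSlice glist
    exact foldl_compToggles (sl rk (q - n - 1) (q - n - 1 - j0)) (List.range (n + 1)) σ'
  have hR : (List.range (q - n - 1)).foldl
      (fun σ j0 => rowInvSlice rk n (q - n - 1) (q - n - 1 - j0) σ) σ
      = compToggles BigR σ := by
    rw [hstep, hBigRdef]
    exact foldl_compToggles (glist rk (q - n - 1) n) (List.range (q - n - 1)) σ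
  -- Pairwise conditions for the two lists.
  have pwL : BigL.Pairwise (RC (rho rk)) := by
    rw [hBigLdef, List.pairwise_flatten]
    constructor
    · intro l hl
      simp only [List.mem_map, List.mem_reverse, List.mem_range] at hl
      obtain ⟨k0, _, rfl⟩ := hl
      refine List.pairwise_of_forall_mem_list ?_
      intro a ha b hb
      rw [memtl] at ha hb
      refine leaf a b ?_ ?_ <;> (intro h; simp only [kappa]; omega)
    · rw [List.pairwise_map, List.pairwise_reverse]
      refine List.pairwise_lt_range.imp ?_
      intro a b hab x hx y hy
      rw [memtl] at hx hy
      refine leaf x y ?_ ?_ <;> (intro h; simp only [kappa]; omega)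
  have pwR : BigR.Pairwise (RC (rho rk)) := by
    rw [hBigRdef, List.pairwise_flatten]
    constructor
    · intro l hl
      simp only [List.mem_map, List.mem_reverse, List.mem_range] at hl
      obtain ⟨j0, _, rfl⟩ := hl
      unfold glist
      rw [List.pairwise_flatten]
      constructor
      · intro l' hl'
        simp only [List.mem_map, List.mem_reverse, List.mem_range] at hl'
        obtain ⟨r, _, rfl⟩ := hl'
        refine List.pairwise_of_forall_mem_list ?_
        intro a ha b hb
        rw [memsl] at ha hb
        refine leaf a b ?_ ?_ <;> (intro h; simp only [kappa]; omega)
      · rw [List.pairwise_map, List.pairwise_reverse]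
        refine List.pairwise_lt_range.imp ?_
        intro a b hab x hx y hy
        rw [memsl] at hx hy
        refine leaf x y ?_ ?_ <;> (intro h; simp only [kappa]; omega)
    · rw [List.pairwise_map, List.pairwise_reverse]
      refine List.pairwise_lt_range.imp ?_
      intro a b hab x hx y hy
      unfold glist at hx hy
      simp only [List.mem_flatten, List.mem_map, List.mem_reverse, List.mem_range] at hx hy
      obtain ⟨lx, ⟨rx, _, rfl⟩, hx⟩ := hx
      obtain ⟨ly, ⟨ry, _, rfl⟩, hy⟩ := hy
      rw [memsl] at hx hy
      refine leaf x y ?_ ?_ <;> (intro h; simp only [kappa]; omega)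
  -- Both lists have no duplicates.
  have ndL : BigL.Nodup := by
    rw [hBigLdef, List.nodup_flatten]
    constructor
    · intro l hl
      simp only [List.mem_map, List.mem_reverse, List.mem_range] at hl
      obtain ⟨k0, _, rfl⟩ := hl
      exact Finset.nodup_toList _
    · rw [List.pairwise_map, List.pairwise_reverse]
      refine List.pairwise_lt_range.imp ?_
      intro a b hab x hx hx'
      rw [memtl] at hx hx'
      omega
  have ndR : BigR.Nodup := by
    rw [hBigRdef, List.nodup_flatten]
    constructor
    · intro l hl
      simp only [List.mem_map, List.mem_reverse, List.mem_range] at hl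
      obtain ⟨j0, _, rfl⟩ := hl
      unfold glist
      rw [List.nodup_flatten]
      constructor
      · intro l' hl'
        simp only [List.mem_map, List.mem_reverse, List.mem_range] at hl'
        obtain ⟨r, _, rfl⟩ := hl'
        exact Finset.nodup_toList _
      · rw [List.pairwise_map, List.pairwise_reverse]
        refine List.pairwise_lt_range.imp ?_
        intro a b hab x hx hx'
        rw [memsl] at hx hx'
        omega
    · rw [List.pairwise_map, List.pairwise_reverse]
      refine List.pairwise_lt_range.imp ?_
      intro a b hab x hx hx'
      unfold glist at hx hx'
      simp only [List.mem_flatten, List.mem_map, List.mem_reverse, List.mem_range] at hx hx'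
      obtain ⟨lx, ⟨rx, _, rfl⟩, hx⟩ := hx
      obtain ⟨ly, ⟨ry, _, rfl⟩, hx'⟩ := hx'
      rw [memsl] at hx hx'
      omega
  -- Both lists contain every element.
  have memL : ∀ x : P × Fin (q - n - 1), x ∈ BigL := by
    intro x
    rw [hBigLdef, List.mem_flatten]
    refine ⟨tl rk q n (q - n - 1) ((q - n + rk x.1 - (x.2 : ℕ) - 2) + 1), ?_, ?_⟩
    · simp only [List.mem_map, List.mem_reverse, List.mem_range]
      refine ⟨q - n + rk x.1 - (x.2 : ℕ) - 2, ?_, rfl⟩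
      have := hrkle x.1
      have := x.2.isLt
      omega
    · rw [memtl]
      have := x.2.isLt
      omega
  have memR : ∀ x : P × Fin (q - n - 1), x ∈ BigR := by
    intro x
    rw [hBigRdef, List.mem_flatten]
    refine ⟨glist rk (q - n - 1) n (q - n - 1 - ((x.2 : ℕ) + 1)), ?_, ?_⟩
    · simp only [List.mem_map, List.mem_reverse, List.mem_range]
      refine ⟨q - n - 1 - ((x.2 : ℕ) + 1), ?_, rfl⟩
      have := x.2.isLt
      omega
    · unfold glist
      rw [List.mem_flatten]
      refine ⟨sl rk (q - n - 1) (q - n - 1 - (q - n - 1 - ((x.2 : ℕ) + 1))) (rk x.1),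
        ?_, ?_⟩
      · simp only [List.mem_map, List.mem_reverse, List.mem_range]
        exact ⟨rk x.1, by have := hrkle x.1; omega, rfl⟩
      · rw [memsl]
        have := x.2.isLt
        exact ⟨rfl, by omega⟩
  have hperm : BigL.Perm BigR :=
    (List.perm_ext_iff_of_nodup ndL ndR).mpr (fun a => by simp [memL a, memR a])
  haveI := isTotal_rho (P := P) rk (q - n - 1)
  haveI := isTrans_rho (P := P) rk (q - n - 1)
  haveI := isAntisymm_rho (P := P) rk (q - n - 1)
  rw [hL, hR]
  exact compToggles_eq_of_perm (rho rk) hperm pwL pwR σ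

end TogPro
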